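/- Let N ≥ 7 be an integer. Then γ₃ is strictly increasing on (0,1), γ₃(t) → −∞ as t → 0⁺, γ₃(t) → +∞ as t → 1⁻, and γ₃(1/2) > 0. Consequently there exists a unique t₁* ∈ (0,1) with γ₃(t₁*) = 0; it satisfies t₁* < 1/2, γ₃(t) < 0 for all t ∈ (0,t₁*), and γ₃(t) > 0 for all t ∈ (t₁*,1). -/
import Mathlib


open Real Filter Set

/-- `γ₃(t) = (1−t²)^{-(N−2)} − (2t)^{-(N−2)} + (t²+1)^{-(N−2)}`. -/
noncomputable def gamma3 (N : ℕ) (t : ℝ) : ℝ :=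
  (1 - t ^ 2) ^ (-((N : ℝ) - 2)) - (2 * t) ^ (-((N : ℝ) - 2)) +
    (t ^ 2 + 1) ^ (-((N : ℝ) - 2))

lemma tendsto_rpow_neg_zero {a : ℝ} (ha : 0 < a) :
    Tendsto (fun x : ℝ => x ^ (-a)) (nhdsWithin 0 (Ioi 0)) atTop := by
  have h1 : Tendsto (fun x : ℝ => x ^ a) (nhdsWithin (0:ℝ) (Ioi 0)) (nhdsWithin 0 (Ioi 0)) := by
    rw [tendsto_nhdsWithin_iff]
    constructor
    · have h := (Real.continuousAt_rpow_const 0 a (Or.inr ha.le)).tendsto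
      rw [Real.zero_rpow ha.ne'] at h
      exact h.mono_left nhdsWithin_le_nhds
    · filter_upwards [self_mem_nhdsWithin] with x hx
      exact Real.rpow_pos_of_pos hx a
  refine (tendsto_inv_nhdsGT_zero.comp h1).congr' ?_
  filter_upwards [self_mem_nhdsWithin] with x (hx : (0:ℝ) < x)
  simp [Function.comp, Real.rpow_neg hx.le]

lemma gamma3_hasDerivAt (N : ℕ) {t : ℝ} (ht : t ∈ Ioo (0:ℝ) 1) :
    HasDerivAt (gamma3 N)
      ((-(2*t)) * (-((N:ℝ)-2)) * (1 - t^2) ^ (-((N:ℝ)-2) - 1)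
       - 2 * (-((N:ℝ)-2)) * (2*t) ^ (-((N:ℝ)-2) - 1)
       + (2*t) * (-((N:ℝ)-2)) * (t^2 + 1) ^ (-((N:ℝ)-2) - 1)) t := by
  obtain ⟨ht0, ht1⟩ := ht
  have h1 : 1 - t^2 ≠ 0 := by nlinarith
  have h2 : 2*t ≠ 0 := by positivity
  have h3 : t^2 + 1 ≠ 0 := by positivity
  have d1 : HasDerivAt (fun x : ℝ => 1 - x^2) (-(2*t)) t := by
    simpa using ((hasDerivAt_pow 2 t).const_sub 1)
  have d2 : HasDerivAt (fun x : ℝ => 2*x) 2 t := by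
    simpa using (hasDerivAt_id t).const_mul 2
  have d3 : HasDerivAt (fun x : ℝ => x^2 + 1) (2*t) t := by
    simpa using ((hasDerivAt_pow 2 t).add_const 1)
  exact ((d1.rpow_const (Or.inl h1)).sub (d2.rpow_const (Or.inl h2))).add
    (d3.rpow_const (Or.inl h3))

lemma gamma3_continuousOn (N : ℕ) : ContinuousOn (gamma3 N) (Ioo (0:ℝ) 1) := by
  have c1 : ContinuousOn (fun t : ℝ => (1 - t^2) ^ (-((N:ℝ)-2))) (Ioo (0:ℝ) 1) := by
    apply ContinuousOn.rpow_const (by fun_prop)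
    rintro x ⟨hx0, hx1⟩
    left; nlinarith
  have c2 : ContinuousOn (fun t : ℝ => (2*t) ^ (-((N:ℝ)-2))) (Ioo (0:ℝ) 1) := by
    apply ContinuousOn.rpow_const (by fun_prop)
    rintro x ⟨hx0, _⟩
    left; positivity
  have c3 : ContinuousOn (fun t : ℝ => (t^2 + 1) ^ (-((N:ℝ)-2))) (Ioo (0:ℝ) 1) := by
    apply ContinuousOn.rpow_const (by fun_prop)
    rintro x _
    left; positivity
  exact (c1.sub c2).add c3

theorem stmt_15 (N : ℕ) (hN : 7 ≤ N) :
    StrictMonoOn (gamma3 N) (Ioo (0 : ℝ) 1) ∧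
    Tendsto (gamma3 N) (nhdsWithin 0 (Ioi 0)) atBot ∧
    Tendsto (gamma3 N) (nhdsWithin 1 (Iio 1)) atTop ∧
    0 < gamma3 N (1 / 2) ∧
    ∃ tstar : ℝ, tstar ∈ Ioo (0 : ℝ) 1 ∧ gamma3 N tstar = 0 ∧
      (∀ s ∈ Ioo (0 : ℝ) 1, gamma3 N s = 0 → s = tstar) ∧
      tstar < 1 / 2 ∧
      (∀ t ∈ Ioo (0 : ℝ) tstar, gamma3 N t < 0) ∧
      (∀ t ∈ Ioo tstar 1, 0 < gamma3 N t) := by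
  have haN : (7:ℝ) ≤ (N:ℝ) := by exact_mod_cast hN
  set a : ℝ := (N:ℝ) - 2 with ha_def
  have ha : (5:ℝ) ≤ a := by simp only [ha_def]; linarith
  have ha0 : (0:ℝ) < a := by linarith
  -- Strict monotonicity
  have hmono : StrictMonoOn (gamma3 N) (Ioo (0 : ℝ) 1) := by
    apply strictMonoOn_of_deriv_pos (convex_Ioo 0 1) (gamma3_continuousOn N)
    intro t ht
    rw [interior_Ioo] at ht
    obtain ⟨ht0, ht1⟩ := ht
    rw [(gamma3_hasDerivAt N ⟨ht0, ht1⟩).deriv]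
    have hb1 : (0:ℝ) < 1 - t^2 := by nlinarith
    have hkey : (t^2 + 1) ^ (-a - 1) ≤ (1 - t^2) ^ (-a - 1) :=
      Real.rpow_le_rpow_of_nonpos hb1 (by nlinarith) (by linarith)
    have hp : (0:ℝ) < (2*t) ^ (-a - 1) := Real.rpow_pos_of_pos (by positivity) _
    have h2t : (0:ℝ) < 2*t := by positivity
    have hkey2 : (2*t) * (t^2 + 1) ^ (-a - 1) ≤ (2*t) * (1 - t^2) ^ (-a - 1) :=
      mul_le_mul_of_nonneg_left hkey h2t.le
    nlinarith [hkey2, hp, Real.rpow_pos_of_pos hb1 (-a-1)]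
  -- limit at 0⁺
  have hbot : Tendsto (gamma3 N) (nhdsWithin 0 (Ioi 0)) atBot := by
    have hf2 : Tendsto (fun t : ℝ => (2*t) ^ (-a)) (nhdsWithin (0:ℝ) (Ioi 0)) atTop := by
      have hin : Tendsto (fun t : ℝ => 2*t) (nhdsWithin (0:ℝ) (Ioi 0)) (nhdsWithin 0 (Ioi 0)) := by
        rw [tendsto_nhdsWithin_iff]
        constructor
        · have : Tendsto (fun t : ℝ => 2*t) (nhds 0) (nhds (2*0)) :=
            (continuous_const.mul continuous_id).tendsto 0
          rw [mul_zero] at this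
          exact this.mono_left nhdsWithin_le_nhds
        · filter_upwards [self_mem_nhdsWithin] with x (hx : (0:ℝ) < x)
          exact mul_pos two_pos hx
      exact (tendsto_rpow_neg_zero ha0).comp hin
    have hf1 : Tendsto (fun t : ℝ => (1 - t^2) ^ (-a)) (nhdsWithin (0:ℝ) (Ioi 0)) (nhds 1) := by
      have hc : ContinuousAt (fun t : ℝ => (1 - t^2) ^ (-a)) 0 :=
        ContinuousAt.rpow_const (by fun_prop) (Or.inl (by norm_num))
      have := hc.tendsto.mono_left (nhdsWithin_le_nhds (s := Ioi (0:ℝ)))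
      simpa using this
    have hf3 : Tendsto (fun t : ℝ => (t^2 + 1) ^ (-a)) (nhdsWithin (0:ℝ) (Ioi 0)) (nhds 1) := by
      have hc : ContinuousAt (fun t : ℝ => (t^2 + 1) ^ (-a)) 0 :=
        ContinuousAt.rpow_const (by fun_prop) (Or.inl (by norm_num))
      have := hc.tendsto.mono_left (nhdsWithin_le_nhds (s := Ioi (0:ℝ)))
      simpa using this
    have : Tendsto (fun t : ℝ => (1 - t^2) ^ (-a) + (t^2+1) ^ (-a) + (-((2*t) ^ (-a))))
        (nhdsWithin (0:ℝ) (Ioi 0)) atBot :=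
      (hf1.add hf3).add_atBot (tendsto_neg_atTop_atBot.comp hf2)
    refine this.congr fun t => ?_
    simp only [gamma3, ← ha_def]
    ring
  -- limit at 1⁻
  have htop : Tendsto (gamma3 N) (nhdsWithin 1 (Iio 1)) atTop := by
    have hf1 : Tendsto (fun t : ℝ => (1 - t^2) ^ (-a)) (nhdsWithin (1:ℝ) (Iio 1)) atTop := by
      have hin : Tendsto (fun t : ℝ => 1 - t^2) (nhdsWithin (1:ℝ) (Iio 1))
          (nhdsWithin 0 (Ioi 0)) := by
        rw [tendsto_nhdsWithin_iff]
        constructor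
        · have : Tendsto (fun t : ℝ => 1 - t^2) (nhds 1) (nhds (1 - 1^2)) := by
            exact (continuous_const.sub (continuous_pow 2)).tendsto 1
          norm_num at this
          exact this.mono_left nhdsWithin_le_nhds
        · filter_upwards [Ioo_mem_nhdsLT_of_mem (show (1:ℝ) ∈ Ioc (-1) 1 by norm_num)]
            with t ht
          obtain ⟨ht1, ht2⟩ := ht
          have : t^2 < 1 := by nlinarith
          simpa using this
      exact (tendsto_rpow_neg_zero ha0).comp hin
    have hf2 : Tendsto (fun t : ℝ => (2*t) ^ (-a)) (nhdsWithin (1:ℝ) (Iio 1))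
        (nhds ((2:ℝ) ^ (-a))) := by
      have hc : ContinuousAt (fun t : ℝ => (2*t) ^ (-a)) 1 :=
        ContinuousAt.rpow_const (by fun_prop) (Or.inl (by norm_num))
      have := hc.tendsto.mono_left (nhdsWithin_le_nhds (s := Iio (1:ℝ)))
      simpa using this
    have hf3 : Tendsto (fun t : ℝ => (t^2+1) ^ (-a)) (nhdsWithin (1:ℝ) (Iio 1))
        (nhds (((1:ℝ)^2+1) ^ (-a))) := by
      have hc : ContinuousAt (fun t : ℝ => (t^2+1) ^ (-a)) 1 :=
        ContinuousAt.rpow_const (by fun_prop) (Or.inl (by norm_num))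
      exact hc.tendsto.mono_left (nhdsWithin_le_nhds (s := Iio (1:ℝ)))
    have : Tendsto (fun t : ℝ => (-((2*t) ^ (-a)) + (t^2+1) ^ (-a)) + (1 - t^2) ^ (-a))
        (nhdsWithin (1:ℝ) (Iio 1)) atTop :=
      (hf2.neg.add hf3).add_atTop hf1
    refine this.congr fun t => ?_
    simp only [gamma3, ← ha_def]
    ring
  -- value at 1/2
  have hhalf : 0 < gamma3 N (1/2) := by
    have h1 : (1:ℝ) < (3/4:ℝ) ^ (-a) := by
      rw [Real.one_lt_rpow_iff_of_pos (by norm_num)]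
      right
      constructor
      · norm_num
      · linarith
    have h2 : (0:ℝ) < (5/4:ℝ) ^ (-a) := Real.rpow_pos_of_pos (by norm_num) _
    have heq : gamma3 N (1/2) = (3/4:ℝ)^(-a) - 1 + (5/4:ℝ)^(-a) := by
      simp only [gamma3, ← ha_def]
      norm_num [Real.one_rpow]
    rw [heq]
    linarith
  refine ⟨hmono, hbot, htop, hhalf, ?_⟩
  -- find a point where gamma3 is negative
  have hev : ∀ᶠ t in nhdsWithin (0:ℝ) (Ioi 0), gamma3 N t < 0 := hbot.eventually_lt_atBot 0
  have hmem : Ioo (0:ℝ) (1/2) ∈ nhdsWithin (0:ℝ) (Ioi 0) :=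
    Ioo_mem_nhdsGT_of_mem (show (0:ℝ) ∈ Ico 0 (1/2) by norm_num)
  obtain ⟨t0, ht0neg, ht0mem⟩ := (hev.and (eventually_of_mem hmem fun x hx => hx)).exists
  obtain ⟨ht00, ht05⟩ := ht0mem
  -- IVT on [t0, 1/2]
  have hsub : Icc t0 (1/2:ℝ) ⊆ Ioo (0:ℝ) 1 := fun x ⟨hx1, hx2⟩ =>
    ⟨lt_of_lt_of_le ht00 hx1, lt_of_le_of_lt hx2 (by norm_num)⟩
  have hivt := intermediate_value_Ioo (le_of_lt ht05) ((gamma3_continuousOn N).mono hsub)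
  have h0mem : (0:ℝ) ∈ Ioo (gamma3 N t0) (gamma3 N (1/2)) := ⟨ht0neg, hhalf⟩
  obtain ⟨tstar, htsmem, htszero⟩ := hivt h0mem
  obtain ⟨hts1, hts2⟩ := htsmem
  have htsIoo : tstar ∈ Ioo (0:ℝ) 1 := ⟨ht00.trans hts1, hts2.trans (by norm_num)⟩
  refine ⟨tstar, htsIoo, htszero, ?_, hts2, ?_, ?_⟩
  · intro s hs hszero
    rcases lt_trichotomy s tstar with h | h | h
    · exfalso
      have := hmono hs htsIoo h
      rw [hszero, htszero] at this
      exact lt_irrefl 0 this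
    · exact h
    · exfalso
      have := hmono htsIoo hs h
      rw [hszero, htszero] at this
      exact lt_irrefl 0 this
  · intro t ⟨htl, htr⟩
    have htIoo : t ∈ Ioo (0:ℝ) 1 := ⟨htl, htr.trans htsIoo.2⟩
    have := hmono htIoo htsIoo htr
    rwa [htszero] at this
  · intro t ⟨htl, htr⟩
    have htIoo : t ∈ Ioo (0:ℝ) 1 := ⟨htsIoo.1.trans htl, htr⟩
    have := hmono htsIoo htIoo htl
    rwa [htszero] at this
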